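/- Let V be a k-vector space with a smooth k-linear action of G = GL₂(ℚ_p), and let v ∈ V be a vector such that: (1) g·v = v for every g in the Iwahori subgroup I; (2) Σ_{λ=0}^{p−1} u_λ·(n_s⁻¹·v) = 0; and (3) Π⁻¹·v = v. Then g·v = v for every g ∈ G. -/

import Mathlib

open Matrix

noncomputable section

/-- The upper-triangular matrix `[[a, c], [0, d]]` in `GL₂(𝔽_p)`. -/
def bEltZMod (p : ℕ) [Fact p.Prime] (a d : (ZMod p)ˣ) (c : ZMod p) : GL (Fin 2) (ZMod p) :=
  Matrix.GeneralLinearGroup.mkOfDetNeZero !![(a : ZMod p), c; 0, (d : ZMod p)]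
    (by simp [Matrix.det_fin_two_of])

/-- The subgroup of upper-triangular matrices in `GL₂(𝔽_p)`. -/
def BZMod (p : ℕ) [Fact p.Prime] : Subgroup (GL (Fin 2) (ZMod p)) :=
  Subgroup.closure
    (Set.range fun x : (ZMod p)ˣ × (ZMod p)ˣ × ZMod p => bEltZMod p x.1 x.2.1 x.2.2)

/-- Reduction modulo `p`, `GL₂(ℤ_p) → GL₂(𝔽_p)`. -/
def redMod (p : ℕ) [Fact p.Prime] : GL (Fin 2) ℤ_[p] →* GL (Fin 2) (ZMod p) :=
  Matrix.GeneralLinearGroup.map (PadicInt.toZMod)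

/-- The Iwahori subgroup `I ≤ GL₂(ℚ_p)`: the elements of `K = GL₂(ℤ_p)` whose reduction
modulo `p` is upper-triangular. -/
def Iw (p : ℕ) [Fact p.Prime] : Subgroup (GL (Fin 2) ℚ_[p]) :=
  Subgroup.map (Matrix.GeneralLinearGroup.map (PadicInt.Coe.ringHom))
    (Subgroup.comap (redMod p) (BZMod p))

/-- The congruence subgroup `K_m`, viewed as a subgroup of `G = GL₂(ℚ_p)`. -/
def Km (p : ℕ) [Fact p.Prime] (m : ℕ) : Subgroup (GL (Fin 2) ℚ_[p]) :=
  Subgroup.map (Matrix.GeneralLinearGroup.map (PadicInt.Coe.ringHom))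
    (MonoidHom.ker (Matrix.GeneralLinearGroup.map (PadicInt.toZModPow m)))

/-- The unipotent upper-triangular matrix `u_c = [[1, c], [0, 1]] ∈ GL₂(ℚ_p)`. -/
def uEltQ (p : ℕ) [Fact p.Prime] (c : ℚ_[p]) : GL (Fin 2) ℚ_[p] :=
  Matrix.GeneralLinearGroup.mkOfDetNeZero !![1, c; 0, 1] (by simp [Matrix.det_fin_two_of])

/-- The matrix `n_s = [[0, -1], [1, 0]] ∈ GL₂(ℚ_p)`. -/
def nsEltQ (p : ℕ) [Fact p.Prime] : GL (Fin 2) ℚ_[p] :=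
  Matrix.GeneralLinearGroup.mkOfDetNeZero !![0, -1; 1, 0]
    (by norm_num [Matrix.det_fin_two_of])

/-- The matrix `Π = [[0, 1], [p, 0]] ∈ GL₂(ℚ_p)`. -/
def PiElt (p : ℕ) [Fact p.Prime] : GL (Fin 2) ℚ_[p] :=
  Matrix.GeneralLinearGroup.mkOfDetNeZero !![0, 1; (p : ℚ_[p]), 0]
    (by
      simp only [Matrix.det_fin_two_of, zero_mul, one_mul, zero_sub, neg_ne_zero]
      exact_mod_cast (Fact.out : p.Prime).ne_zero)


/-!
Let `w = n_s⁻¹ v`. Lower unipotents `[[1, 0], [c, 1]]` with `c ∈ pℤ_p` lie in `I`, so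
`Φ(λ) = [[1, 0], [λ, 1]] v` only depends on `λ mod p`. Since `u_λ n_s⁻¹ ∈ [[1, 0], [λ⁻¹, 1]] I` for
`λ ≠ 0`, hypothesis (2) reads `∑_λ Φ(λ) = v - w`. Translating by `[[1, 0], [μ, 1]]`, which fixes
`w` and permutes the `Φ(λ)`, gives `Φ(μ) = v` for all `μ`; hence `v - w = p • v = 0`, i.e. `n_s`
fixes `v`.

It remains that `I`, `n_s` and `Π` generate `G`: `diag(p, 1) = diag(-1, 1) n_s Π` and
`ℚ_p^× = p^ℤ ℤ_p^×` give every `diag(x, 1)`, conjugation then gives all upper and lower unipotents,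
and over any field these together generate `GL₂`.
-/

namespace Matrix.GeneralLinearGroup
variable {R : Type*} [CommRing R]

def lowerLeftHom : AddChar R (GL (Fin 2) R) where
  toFun x := ⟨!![1, 0; x, 1], !![1, 0; -x, 1], by simp [one_fin_two], by simp [one_fin_two]⟩
  map_zero_eq_one' := by simp [Units.ext_iff, one_fin_two]
  map_add_eq_mul' a b := by simp [Units.ext_iff, add_comm]

def diagLeftHom : Rˣ →* GL (Fin 2) R where
  toFun x := ⟨!![(x : R), 0; 0, 1], !![((x⁻¹ : Rˣ) : R), 0; 0, 1], by simp [one_fin_two],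
    by simp [one_fin_two]⟩
  map_one' := by simp [Units.ext_iff, one_fin_two]
  map_mul' a b := by simp [Units.ext_iff]

@[simp] lemma coe_lowerLeftHom (x : R) :
    (lowerLeftHom x : Matrix (Fin 2) (Fin 2) R) = !![1, 0; x, 1] := rfl

@[simp] lemma coe_diagLeftHom (x : Rˣ) :
    (diagLeftHom x : Matrix (Fin 2) (Fin 2) R) = !![(x : R), 0; 0, 1] := rfl

lemma diagLeftHom_mul_upperRightHom_mul_inv (a : Rˣ) (x : R) :
    diagLeftHom a * upperRightHom x * (diagLeftHom a)⁻¹ = upperRightHom (a * x) := by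
  rw [mul_inv_eq_iff_eq_mul]
  ext i j
  fin_cases i <;> fin_cases j <;> simp [Matrix.mul_apply, Fin.sum_univ_two, mul_comm]

variable {K : Type*} [Field K]

lemma eq_diagLeftHom_mul_upperRightHom_mul_lowerLeftHom_mul_upperRightHom (g : GL (Fin 2) K)
    (hc : g 1 0 ≠ 0) :
    g = diagLeftHom (det g) * upperRightHom ((g 0 0 / g.val.det - 1) / g 1 0) *
      lowerLeftHom (g 1 0) * upperRightHom ((g 1 1 - 1) / g 1 0) := by
  have hδ : g.val.det ≠ 0 := det_ne_zero g
  rw [det_fin_two] at hδ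
  ext i j
  fin_cases i <;> fin_cases j <;> simp [Matrix.mul_apply, Fin.sum_univ_two, det_fin_two] <;>
    field_simp <;> ring

theorem eq_top_of_upperRightHom_lowerLeftHom_diagLeftHom_mem {H : Subgroup (GL (Fin 2) K)}
    (hu : ∀ x, upperRightHom x ∈ H) (hl : ∀ x, lowerLeftHom x ∈ H)
    (hd : ∀ x, diagLeftHom x ∈ H) : H = ⊤ := by
  have hH : ∀ g : GL (Fin 2) K, g 1 0 ≠ 0 → g ∈ H := fun g hc => by
    rw [eq_diagLeftHom_mul_upperRightHom_mul_lowerLeftHom_mul_upperRightHom g hc]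
    exact mul_mem (mul_mem (mul_mem (hd _) (hu _)) (hl _)) (hu _)
  refine eq_top_iff.mpr fun g _ => ?_
  by_cases hc : g 1 0 = 0
  · have h00 : g 0 0 ≠ 0 := fun h0 => det_ne_zero g (by simp [det_fin_two, h0, hc])
    have hlg : lowerLeftHom 1 * g ∈ H :=
      hH _ (by simpa [Matrix.mul_apply, Fin.sum_univ_two, hc] using h00)
    have h := mul_mem (hl (-1)) hlg
    rwa [← mul_assoc, ← AddChar.map_add_eq_mul, neg_add_cancel, AddChar.map_zero_eq_one,
      one_mul] at h
  · exact hH g hc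

end Matrix.GeneralLinearGroup

namespace Representation
variable {k G V : Type*} [CommSemiring k] [Group G] [AddCommMonoid V] [Module k V]

def stabilizer (ρ : Representation k G V) (v : V) : Subgroup G :=
  (MulAction.stabilizer (V →ₗ[k] V)ˣ v).comap ρ.asGroupHom

@[simp] lemma mem_stabilizer (ρ : Representation k G V) (v : V) (g : G) :
    g ∈ ρ.stabilizer v ↔ ρ g v = v := Iff.rfl

end Representation

lemma PadicInt.isUnit_iff_toZMod_ne_zero {p : ℕ} [Fact p.Prime] (z : ℤ_[p]) :
    IsUnit z ↔ PadicInt.toZMod z ≠ 0 := by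
  rw [Ne, ← RingHom.mem_ker, PadicInt.ker_toZMod, IsLocalRing.mem_maximalIdeal, mem_nonunits_iff,
    not_not]

lemma Padic.exists_eq_zpow_mul_unit {p : ℕ} [Fact p.Prime] {x : ℚ_[p]} (hx : x ≠ 0) :
    ∃ (n : ℤ) (u : ℤ_[p]ˣ), x = (p : ℚ_[p]) ^ n * (u : ℤ_[p]) := by
  have hp : (p : ℚ_[p]) ≠ 0 := by exact_mod_cast (Fact.out : p.Prime).ne_zero
  have hp' : (p : ℝ) ≠ 0 := by exact_mod_cast (Fact.out : p.Prime).ne_zero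
  have hnorm : ‖x * (p : ℚ_[p]) ^ (-x.valuation)‖ = 1 := by
    rw [norm_mul, Padic.norm_p_zpow, Padic.norm_eq_zpow_neg_valuation hx, neg_neg,
      ← zpow_add₀ hp', neg_add_cancel, zpow_zero]
  refine ⟨x.valuation, PadicInt.mkUnits hnorm, ?_⟩
  rw [PadicInt.mkUnits_eq, mul_left_comm, ← zpow_add₀ hp, add_neg_cancel, zpow_zero, mul_one]

open Matrix.GeneralLinearGroup

section Iwahori
variable {p : ℕ} [Fact p.Prime]

lemma mem_Iw_of_isUnit {g : GL (Fin 2) ℚ_[p]} {A B C D : ℤ_[p]} (hA : IsUnit A) (hD : IsUnit D)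
    (hC : PadicInt.toZMod C = 0)
    (hg : (g : Matrix (Fin 2) (Fin 2) ℚ_[p]) = !![(A : ℚ_[p]), B; C, D]) : g ∈ Iw p := by
  have hA' := hA.map PadicInt.toZMod
  have hD' := hD.map PadicInt.toZMod
  have hdet : IsUnit (!![A, B; C, D]).det := by
    rw [PadicInt.isUnit_iff_toZMod_ne_zero, det_fin_two_of, map_sub, map_mul, map_mul, hC,
      mul_zero, sub_zero]
    exact (hA'.mul hD').ne_zero
  refine ⟨mk'' _ hdet, Subgroup.subset_closure ⟨(hA'.unit, hD'.unit, PadicInt.toZMod B), ?_⟩, ?_⟩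
  · ext i j
    fin_cases i <;> fin_cases j <;> simp [bEltZMod, redMod, hC]
  · ext i j
    rw [hg]
    fin_cases i <;> fin_cases j <;> rfl

lemma upperRightHom_mem_Iw (z : ℤ_[p]) : upperRightHom (z : ℚ_[p]) ∈ Iw p :=
  mem_Iw_of_isUnit (B := z) isUnit_one isUnit_one (map_zero _) (by simp)

lemma lowerLeftHom_mem_Iw {z : ℤ_[p]} (hz : PadicInt.toZMod z = 0) :
    lowerLeftHom (z : ℚ_[p]) ∈ Iw p :=
  mem_Iw_of_isUnit (B := 0) isUnit_one isUnit_one hz (by simp)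

lemma diagLeftHom_mem_Iw (u : ℤ_[p]ˣ) :
    diagLeftHom (Units.map PadicInt.Coe.ringHom.toMonoidHom u) ∈ Iw p :=
  mem_Iw_of_isUnit (B := 0) u.isUnit isUnit_one (map_zero _) (by simp; rfl)

end Iwahori

section Identities
variable {p : ℕ} [Fact p.Prime]

lemma uEltQ_eq_upperRightHom (x : ℚ_[p]) : uEltQ p x = upperRightHom x := Units.ext rfl

lemma coe_nsEltQ_inv : (((nsEltQ p)⁻¹ : GL (Fin 2) ℚ_[p]) : Matrix (Fin 2) (Fin 2) ℚ_[p]) =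
    !![0, 1; -1, 0] := by
  rw [coe_units_inv]
  refine inv_eq_left_inv ?_
  ext i j
  fin_cases i <;> fin_cases j <;> simp [nsEltQ]

lemma nsEltQ_mul_lowerLeftHom_mul_inv (c : ℚ_[p]) :
    nsEltQ p * lowerLeftHom c * (nsEltQ p)⁻¹ = upperRightHom (-c) := by
  ext i j
  rw [Units.val_mul, Units.val_mul, coe_nsEltQ_inv]
  fin_cases i <;> fin_cases j <;> simp [nsEltQ, Matrix.mul_apply, Fin.sum_univ_two]

lemma lowerLeftHom_inv_mul_upperRightHom_mul_nsEltQ_inv_mem_Iw (u : ℤ_[p]ˣ) :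
    (lowerLeftHom ((↑u⁻¹ : ℤ_[p]) : ℚ_[p]))⁻¹ * upperRightHom (u : ℚ_[p]) * (nsEltQ p)⁻¹ ∈
      Iw p := by
  refine mem_Iw_of_isUnit (A := -u) (B := 1) (C := 0) (D := -↑u⁻¹) u.isUnit.neg u⁻¹.isUnit.neg
    (map_zero _) ?_
  have hu : ((↑u⁻¹ : ℤ_[p]) : ℚ_[p]) * (u : ℚ_[p]) = 1 := by
    rw [← PadicInt.coe_mul, Units.inv_mul, PadicInt.coe_one]
  rw [← AddChar.map_neg_eq_inv, Units.val_mul, Units.val_mul, coe_nsEltQ_inv]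
  ext i j
  fin_cases i <;> fin_cases j <;> simp [Matrix.mul_apply, Fin.sum_univ_two, hu]

lemma diagLeftHom_neg_one_mul_nsEltQ_mul_PiElt (hp : (p : ℚ_[p]) ≠ 0) :
    diagLeftHom (-1) * nsEltQ p * PiElt p = diagLeftHom (Units.mk0 (p : ℚ_[p]) hp) := by
  ext i j
  fin_cases i <;> fin_cases j <;> simp [nsEltQ, PiElt, Matrix.mul_apply, Fin.sum_univ_two]

end Identities

theorem eq_top_of_Iw_le {p : ℕ} [Fact p.Prime] {H : Subgroup (GL (Fin 2) ℚ_[p])} (hI : Iw p ≤ H)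
    (hns : nsEltQ p ∈ H) (hPi : PiElt p ∈ H) : H = ⊤ := by
  have hp : (p : ℚ_[p]) ≠ 0 := by exact_mod_cast (Fact.out : p.Prime).ne_zero
  have hdiagUnit (u : ℤ_[p]ˣ) : diagLeftHom (Units.map PadicInt.Coe.ringHom.toMonoidHom u) ∈ H :=
    hI (diagLeftHom_mem_Iw u)
  have hdiagP : diagLeftHom (Units.mk0 (p : ℚ_[p]) hp) ∈ H := by
    rw [← diagLeftHom_neg_one_mul_nsEltQ_mul_PiElt hp]
    exact mul_mem (mul_mem (by simpa using hdiagUnit (-1)) hns) hPi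
  have hdiag (x : ℚ_[p]ˣ) : diagLeftHom x ∈ H := by
    obtain ⟨n, u, hx⟩ := Padic.exists_eq_zpow_mul_unit x.ne_zero
    have : x = Units.mk0 (p : ℚ_[p]) hp ^ n * Units.map PadicInt.Coe.ringHom.toMonoidHom u :=
      Units.ext <| by
        rw [hx, Units.val_mul, Units.val_zpow_eq_zpow_val, Units.val_mk0, Units.coe_map]; rfl
    rw [this, map_mul, map_zpow]
    exact mul_mem (zpow_mem hdiagP n) (hdiagUnit u)
  have hupper (x : ℚ_[p]) : upperRightHom x ∈ H := by
    rcases eq_or_ne x 0 with rfl | hx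
    · simp
    have hconj := diagLeftHom_mul_upperRightHom_mul_inv (Units.mk0 x hx) 1
    rw [Units.val_mk0, mul_one] at hconj
    rw [← hconj]
    have hu1 : upperRightHom (1 : ℚ_[p]) ∈ Iw p :=
      PadicInt.coe_one (p := p) ▸ upperRightHom_mem_Iw 1
    exact mul_mem (mul_mem (hdiag _) (hI hu1)) (inv_mem (hdiag _))
  refine eq_top_of_upperRightHom_lowerLeftHom_diagLeftHom_mem hupper (fun x => ?_) hdiag
  have : lowerLeftHom x = (nsEltQ p)⁻¹ * upperRightHom (-x) * nsEltQ p := by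
    rw [← nsEltQ_mul_lowerLeftHom_mul_inv]; group
  rw [this]
  exact mul_mem (mul_mem (inv_mem hns) (hupper _)) hns

section Invariance
variable {p : ℕ} [Fact p.Prime] {k V : Type*} [CommRing k] [AddCommGroup V] [Module k V]
  (ρ : Representation k (GL (Fin 2) ℚ_[p]) V) {v : V}

/-- The `Φ` of the proof sketch, indexed by `ZMod p` through the representatives `ZMod.val`. -/
def lowerTranslate (v : V) (a : ZMod p) : V := ρ (lowerLeftHom (a.val : ℚ_[p])) v

lemma rho_lowerLeftHom_apply (hI : ∀ g ∈ Iw p, ρ g v = v) (c : ℤ_[p]) :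
    ρ (lowerLeftHom (c : ℚ_[p])) v = lowerTranslate ρ v (PadicInt.toZMod c) := by
  set a := PadicInt.toZMod c
  have hc : PadicInt.toZMod (c - (a.val : ℤ_[p])) = 0 := by
    rw [map_sub, map_natCast, ZMod.natCast_zmod_val, sub_self]
  have hsplit : (c : ℚ_[p]) = (a.val : ℚ_[p]) + ((c - (a.val : ℤ_[p]) : ℤ_[p]) : ℚ_[p]) := by
    push_cast; ring
  rw [lowerTranslate, hsplit, AddChar.map_add_eq_mul, map_mul, Module.End.mul_apply,
    hI _ (lowerLeftHom_mem_Iw hc)]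

lemma rho_upperRightHom_nsEltQ_inv_apply (hI : ∀ g ∈ Iw p, ρ g v = v) {a : ZMod p} (ha : a ≠ 0) :
    ρ (upperRightHom (a.val : ℚ_[p])) (ρ (nsEltQ p)⁻¹ v) = lowerTranslate ρ v a⁻¹ := by
  have hunit : IsUnit (a.val : ℤ_[p]) := by
    rwa [PadicInt.isUnit_iff_toZMod_ne_zero, map_natCast, ZMod.natCast_zmod_val]
  set u := hunit.unit
  have hu : (u : ℤ_[p]) = a.val := hunit.unit_spec
  have hinv : PadicInt.toZMod (u⁻¹ : ℤ_[p]ˣ) = a⁻¹ := by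
    refine eq_inv_of_mul_eq_one_left ?_
    rw [← ZMod.natCast_zmod_val a, ← map_natCast PadicInt.toZMod, ← hu, ← map_mul, Units.inv_mul,
      map_one]
  set B := (lowerLeftHom (((u⁻¹ : ℤ_[p]ˣ) : ℤ_[p]) : ℚ_[p]))⁻¹ *
    upperRightHom ((u : ℤ_[p]) : ℚ_[p]) * (nsEltQ p)⁻¹
  have hB : upperRightHom ((u : ℤ_[p]) : ℚ_[p]) * (nsEltQ p)⁻¹ =
      lowerLeftHom (((u⁻¹ : ℤ_[p]ˣ) : ℤ_[p]) : ℚ_[p]) * B := by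
    simp only [B]; group
  rw [← PadicInt.coe_natCast, ← hu, ← Module.End.mul_apply, ← map_mul, hB, map_mul,
    Module.End.mul_apply, hI _ (lowerLeftHom_inv_mul_upperRightHom_mul_nsEltQ_inv_mem_Iw u),
    rho_lowerLeftHom_apply ρ hI, hinv]

lemma rho_lowerLeftHom_nsEltQ_inv_apply (hI : ∀ g ∈ Iw p, ρ g v = v) (c : ℤ_[p]) :
    ρ (lowerLeftHom (c : ℚ_[p])) (ρ (nsEltQ p)⁻¹ v) = ρ (nsEltQ p)⁻¹ v := by
  have hconj :
      lowerLeftHom (c : ℚ_[p]) * (nsEltQ p)⁻¹ = (nsEltQ p)⁻¹ * upperRightHom (-c : ℚ_[p]) := by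
    rw [← nsEltQ_mul_lowerLeftHom_mul_inv]; group
  rw [← Module.End.mul_apply, ← map_mul, hconj, map_mul, Module.End.mul_apply,
    ← PadicInt.coe_neg, hI _ (upperRightHom_mem_Iw _)]

lemma rho_lowerLeftHom_lowerTranslate (hI : ∀ g ∈ Iw p, ρ g v = v) (b a : ZMod p) :
    ρ (lowerLeftHom (b.val : ℚ_[p])) (lowerTranslate ρ v a) = lowerTranslate ρ v (b + a) := by
  have h := rho_lowerLeftHom_apply ρ hI (b.val + a.val)
  rw [map_add, map_natCast, map_natCast, ZMod.natCast_zmod_val, ZMod.natCast_zmod_val] at h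
  rw [← h, lowerTranslate, ← Module.End.mul_apply, ← map_mul, ← AddChar.map_add_eq_mul]
  push_cast; rfl

lemma sum_lowerTranslate (hI : ∀ g ∈ Iw p, ρ g v = v)
    (hsum : ∑ j ∈ Finset.range p, ρ (upperRightHom (j : ℚ_[p])) (ρ (nsEltQ p)⁻¹ v) = 0) :
    ∑ a, lowerTranslate ρ v a = v - ρ (nsEltQ p)⁻¹ v := by
  set w := ρ (nsEltQ p)⁻¹ v
  have hsum' : ∑ a : ZMod p, ρ (upperRightHom (a.val : ℚ_[p])) w = 0 := by
    rw [← hsum]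
    exact Finset.sum_nbij' (fun a => a.val) (fun j => (j : ZMod p)) (by simp [ZMod.val_lt])
      (by simp) (fun a _ => ZMod.natCast_zmod_val a)
      (fun j hj => ZMod.val_cast_of_lt (Finset.mem_range.mp hj)) (fun _ _ => rfl)
  have hterm (a : ZMod p) : ρ (upperRightHom (a.val : ℚ_[p])) w =
      lowerTranslate ρ v a⁻¹ + if a = 0 then w - v else 0 := by
    by_cases ha : a = 0
    · simp [ha, lowerTranslate]
    · rw [rho_upperRightHom_nsEltQ_inv_apply ρ hI ha, if_neg ha, add_zero]
  simp only [hterm, Finset.sum_add_distrib, Fintype.sum_ite_eq'] at hsum'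
  have hinv : ∑ a : ZMod p, lowerTranslate ρ v a⁻¹ = ∑ a, lowerTranslate ρ v a :=
    Equiv.sum_comp (Equiv.inv _) _
  rw [hinv] at hsum'
  rw [← neg_sub, eq_neg_iff_add_eq_zero]
  exact hsum'

lemma lowerTranslate_eq_self (hI : ∀ g ∈ Iw p, ρ g v = v)
    (hsum : ∑ j ∈ Finset.range p, ρ (upperRightHom (j : ℚ_[p])) (ρ (nsEltQ p)⁻¹ v) = 0)
    (b : ZMod p) : lowerTranslate ρ v b = v := by
  have h := congrArg (ρ (lowerLeftHom (b.val : ℚ_[p]))) (sum_lowerTranslate ρ hI hsum)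
  have hw := rho_lowerLeftHom_nsEltQ_inv_apply ρ hI (b.val : ℤ_[p])
  rw [PadicInt.coe_natCast] at hw
  rw [map_sum, map_sub, hw] at h
  simp only [rho_lowerLeftHom_lowerTranslate ρ hI b] at h
  have hshift : ∑ a, lowerTranslate ρ v (b + a) = ∑ a, lowerTranslate ρ v a :=
    Equiv.sum_comp (Equiv.addLeft b) _
  rw [hshift, sum_lowerTranslate ρ hI hsum] at h
  exact (sub_left_injective h).symm

lemma rho_nsEltQ_inv_apply_eq_self [CharP k p] (hI : ∀ g ∈ Iw p, ρ g v = v)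
    (hsum : ∑ j ∈ Finset.range p, ρ (upperRightHom (j : ℚ_[p])) (ρ (nsEltQ p)⁻¹ v) = 0) :
    ρ (nsEltQ p)⁻¹ v = v := by
  have h := sum_lowerTranslate ρ hI hsum
  rw [Finset.sum_congr rfl fun b _ => lowerTranslate_eq_self ρ hI hsum b, Finset.sum_const,
    Finset.card_univ, ZMod.card, ← Nat.cast_smul_eq_nsmul k, CharP.cast_eq_zero, zero_smul] at h
  exact (sub_eq_zero.mp h.symm).symm

end Invariance

theorem stmt_4 (p : ℕ) [Fact p.Prime]
    (V : Type) [AddCommGroup V] [Module (AlgebraicClosure (ZMod p)) V]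
    (ρ : Representation (AlgebraicClosure (ZMod p)) (GL (Fin 2) ℚ_[p]) V)
    (v : V)
    (hI : ∀ g ∈ Iw p, ρ g v = v)
    (hsum : ∑ j ∈ Finset.range p, ρ (uEltQ p (j : ℚ_[p])) (ρ ((nsEltQ p)⁻¹) v) = 0)
    (hPi : ρ ((PiElt p)⁻¹) v = v) :
    ∀ g : GL (Fin 2) ℚ_[p], ρ g v = v := by
  simp only [uEltQ_eq_upperRightHom] at hsum
  have hns : nsEltQ p ∈ ρ.stabilizer v :=
    inv_mem_iff.mp (rho_nsEltQ_inv_apply_eq_self ρ hI hsum)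
  have hPi' : PiElt p ∈ ρ.stabilizer v := inv_mem_iff.mp hPi
  intro g
  rw [← Representation.mem_stabilizer, eq_top_of_Iw_le hI hns hPi']
  trivial

end
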